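/- For 0 ≤ k < α ≤ l < M, t ∈ I_M, and x ∈ I_{l+1}(e_k + e_l), the dyadic Fejér kernel satisfies 2^{α} |K_{2^{α}}(x + t)| ≤ 2^{α + k}. -/

import Mathlib

open MeasureTheory Finset

/-- The Walsh group `G = (ℤ/2)^ℕ`. -/
abbrev G : Type := ℕ → ZMod 2

instance : TopologicalSpace (ZMod 2) := ⊥
instance : DiscreteTopology (ZMod 2) := ⟨rfl⟩
noncomputable instance : MeasurableSpace G := borel G
instance : BorelSpace G := ⟨rfl⟩

/-- The normalized Haar measure on `G`. -/
noncomputable def μ : Measure G :=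
  Measure.addHaarMeasure (⊤ : TopologicalSpace.PositiveCompacts G)

/-- Rademacher functions. -/
noncomputable def rad (k : ℕ) (x : G) : ℝ := (-1 : ℝ) ^ (x k).val

/-- Walsh–Paley functions. -/
noncomputable def walsh (n : ℕ) (x : G) : ℝ :=
  ∏ k ∈ Finset.range n, rad k x ^ (n.testBit k).toNat

/-- Walsh–Dirichlet kernels `D_n = ∑_{k<n} w_k`. -/
noncomputable def dirichlet (n : ℕ) (x : G) : ℝ := ∑ k ∈ Finset.range n, walsh k x

/-- Walsh–Fejér kernels `K_n = (1/n) ∑_{k=1}^n D_k`. -/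
noncomputable def fejer (n : ℕ) (x : G) : ℝ :=
  (1 / (n : ℝ)) * ∑ k ∈ Finset.range n, dirichlet (k + 1) x

/-- The cylinder `I_n(x) = {y : y_j = x_j for j < n}`. -/
def cyl (n : ℕ) (x : G) : Set G := {y | ∀ j < n, y j = x j}

/-- `I_n = I_n(0)`. -/
def I (n : ℕ) : Set G := cyl n 0

/-- `e_k` has a `1` in coordinate `k` and `0` elsewhere. -/
def e (k : ℕ) : G := fun j => if j = k then 1 else 0

/-- Walsh–Fourier coefficients. -/
noncomputable def fcoef (f : G → ℝ) (n : ℕ) : ℝ := ∫ x, f x * walsh n x ∂μ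

/-- Walsh partial sums. -/
noncomputable def partialSum (f : G → ℝ) (n : ℕ) (x : G) : ℝ :=
  ∑ k ∈ Finset.range n, fcoef f k * walsh k x

/-- Fejér means `σ_n f = (1/n) ∑_{k=1}^n S_k f`. -/
noncomputable def fejerMean (f : G → ℝ) (n : ℕ) (x : G) : ℝ :=
  (1 / (n : ℝ)) * ∑ k ∈ Finset.range n, partialSum f (k + 1) x

/-!
The proof computes `2^α K_{2^α}(z)` exactly for `z = x + t`, which agrees with `e_k` on the
first `α` coordinates. Paley's lemma gives `D_{2^n} = 2^n 𝟙_{I_n}`, and splitting the Fejér sum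
into two halves gives `2^{n+1} K_{2^{n+1}} = (1 + r_n) 2^n K_{2^n} + 2^n D_{2^n}`. At `n = k` the
factor `1 + r_k(z)` vanishes, leaving `4^k`; for `k < n < α` we have `r_n(z) = 1` and
`D_{2^n}(z) = 0`, so the sum doubles at each step. Hence `2^α K_{2^α}(z) = 2^{α+k-1}`.
-/

lemma walsh_eq_prod_range {m N : ℕ} (h : m < 2 ^ N) (x : G) :
    walsh m x = ∏ i ∈ range N, rad i x ^ (m.testBit i).toNat := by
  have testBit_eq_false {n i : ℕ} (hn : n < 2 ^ i) : (n.testBit i).toNat = 0 := by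
    rw [Nat.testBit_lt_two_pow hn]; rfl
  rcases le_total m N with hmN | hNm
  · refine prod_subset (range_subset_range.2 hmN) fun i _ hi => ?_
    rw [testBit_eq_false ((Nat.lt_two_pow_self).trans_le
      (Nat.pow_le_pow_right two_pos (not_lt.1 (mem_range.not.1 hi)))), pow_zero]
  · refine (prod_subset (range_subset_range.2 hNm) fun i _ hi => ?_).symm
    rw [testBit_eq_false (h.trans_le
      (Nat.pow_le_pow_right two_pos (not_lt.1 (mem_range.not.1 hi)))), pow_zero]

lemma walsh_two_pow_add {n j : ℕ} (hj : j < 2 ^ n) (x : G) :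
    walsh (2 ^ n + j) x = rad n x * walsh j x := by
  have hlt : 2 ^ n + j < 2 ^ (n + 1) := by rw [pow_succ]; omega
  rw [walsh_eq_prod_range hlt, walsh_eq_prod_range hj, prod_range_succ,
    Nat.testBit_two_pow_add_eq, Nat.testBit_lt_two_pow hj, mul_comm]
  congr 1
  · simp
  · exact prod_congr rfl fun i hi => by rw [Nat.testBit_two_pow_add_gt (mem_range.1 hi)]

lemma dirichlet_two_pow_add {n j : ℕ} (hj : j ≤ 2 ^ n) (x : G) :
    dirichlet (2 ^ n + j) x = dirichlet (2 ^ n) x + rad n x * dirichlet j x := by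
  rw [dirichlet, sum_range_add, dirichlet, dirichlet, mul_sum]
  congr 1
  exact sum_congr rfl fun i hi => walsh_two_pow_add ((mem_range.1 hi).trans_le hj) x

lemma dirichlet_two_pow_succ (n : ℕ) (x : G) :
    dirichlet (2 ^ (n + 1)) x = (1 + rad n x) * dirichlet (2 ^ n) x := by
  rw [pow_succ, mul_two, dirichlet_two_pow_add le_rfl]
  ring

lemma one_add_rad (n : ℕ) (x : G) : 1 + rad n x = if x n = 0 then 2 else 0 := by
  simp only [rad, ← ZMod.val_eq_zero]
  obtain h | h : (x n).val = 0 ∨ (x n).val = 1 := by have := ZMod.val_lt (x n); omega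
  all_goals norm_num [h]

lemma mem_cyl_succ {n : ℕ} {x y : G} : y ∈ cyl (n + 1) x ↔ y ∈ cyl n x ∧ y n = x n := by
  simp only [cyl, Set.mem_ofPred_eq, Nat.forall_lt_succ_right]

lemma dirichlet_two_pow (n : ℕ) (x : G) :
    dirichlet (2 ^ n) x = (I n).indicator (fun _ => 2 ^ n) x := by
  induction n with
  | zero =>
    rw [Set.indicator_of_mem (show x ∈ I 0 from fun j hj => absurd hj (Nat.not_lt_zero j))]
    simp [dirichlet, walsh]
  | succ n ih =>
    rw [dirichlet_two_pow_succ, ih, one_add_rad]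
    have hI : x ∈ I (n + 1) ↔ x ∈ I n ∧ x n = 0 := mem_cyl_succ
    by_cases hx : x ∈ I n <;> by_cases hxn : x n = 0 <;> simp [hx, hxn, hI, pow_succ, mul_comm]

lemma natCast_mul_fejer (n : ℕ) (x : G) :
    n * fejer n x = ∑ j ∈ range n, dirichlet (j + 1) x := by
  rcases eq_or_ne n 0 with rfl | hn
  · simp
  · rw [fejer, ← mul_assoc, mul_one_div_cancel (Nat.cast_ne_zero.2 hn), one_mul]

lemma two_pow_succ_mul_fejer (n : ℕ) (x : G) :
    2 ^ (n + 1) * fejer (2 ^ (n + 1)) x =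
      (1 + rad n x) * (2 ^ n * fejer (2 ^ n) x) + 2 ^ n * dirichlet (2 ^ n) x := by
  have h := natCast_mul_fejer (2 ^ n) x
  have h' := natCast_mul_fejer (2 ^ (n + 1)) x
  push_cast at h h'
  have hsecond : ∑ j ∈ range (2 ^ n), dirichlet (2 ^ n + j + 1) x =
      ∑ j ∈ range (2 ^ n), (dirichlet (2 ^ n) x + rad n x * dirichlet (j + 1) x) :=
    sum_congr rfl fun j hj => dirichlet_two_pow_add (mem_range.1 hj) x
  rw [h, h', pow_succ, mul_two, sum_range_add, hsecond, sum_add_distrib, ← mul_sum,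
    sum_const, card_range, nsmul_eq_mul]
  push_cast
  ring

lemma two_pow_mul_fejer_of_mem_cyl_e {k m : ℕ} {z : G} (hz : z ∈ cyl (k + m + 1) (e k)) :
    2 ^ (k + m + 1) * fejer (2 ^ (k + m + 1)) z = 4 ^ k * 2 ^ m := by
  induction m with
  | zero =>
    have hzk : z k ≠ 0 := by simp [hz k (by omega), e]
    have hzI : z ∈ I k := fun j hj => by simpa [e, hj.ne] using hz j (by omega)
    rw [add_zero, two_pow_succ_mul_fejer, one_add_rad, if_neg hzk, dirichlet_two_pow,
      Set.indicator_of_mem hzI]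
    norm_num [← mul_pow]
  | succ m ih =>
    have hz' : z ∈ cyl (k + m + 1) (e k) := fun j hj => hz j (by omega)
    have hne : k + m + 1 ≠ k := by omega
    have hzn : z (k + m + 1) = 0 := by simpa [e, hne] using hz (k + m + 1) (by omega)
    have hzI : z ∉ I (k + m + 1) := fun h => by
      simpa [hz k (by omega), e] using h k (by omega)
    rw [← add_assoc, two_pow_succ_mul_fejer, ih hz', one_add_rad, if_pos hzn,
      dirichlet_two_pow, Set.indicator_of_notMem hzI]
    ring

/-- for `k < α ≤ l < M`, `t ∈ I_M` and `x ∈ I_{l+1}(e_k+e_l)`,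
`2^α |K_{2^α}(x+t)| ≤ 2^{α+k}`. -/
theorem fejer_dyadic_bound (M k α l : ℕ) (h1 : k < α) (h2 : α ≤ l) (h3 : l < M)
    (t : G) (ht : t ∈ I M) (x : G) (hx : x ∈ cyl (l + 1) (e k + e l)) :
    (2 : ℝ) ^ α * |fejer (2 ^ α) (x + t)| ≤ (2 : ℝ) ^ (α + k) := by
  obtain ⟨m, rfl⟩ := Nat.exists_eq_add_of_lt h1
  have hz : x + t ∈ cyl (k + m + 1) (e k) := fun j hj => by
    have hjl : j ≠ l := by omega
    simp [hx j (by omega), ht j (by omega), e, hjl]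
  calc (2 : ℝ) ^ (k + m + 1) * |fejer (2 ^ (k + m + 1)) (x + t)|
      = 2 ^ (2 * k + m) := by
        rw [← abs_of_pos (by positivity : (0 : ℝ) < 2 ^ (k + m + 1)), ← abs_mul,
          two_pow_mul_fejer_of_mem_cyl_e hz]
        norm_num [pow_add, pow_mul]
    _ ≤ 2 ^ (k + m + 1 + k) := pow_le_pow_right₀ one_le_two (by omega)
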